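/- arXiv:1907.09097 — 3 statements merged into one kernel-verified Lean document; each statement's English description precedes it below -/
import Mathlib

section
/- Every call sequence of length at least n⁴ contains a stationary contiguous subsequence of length at least n², where a contiguous subsequence σ₂ of σ = σ₁.σ₂.σ₃ is stationary if all the gossip situations obtained by applying σ₁ followed by successive prefixes of σ₂ to root are equal. -/
/-- A call is an ordered pair of distinct agents (caller, callee). -/
def Call (n : ℕ) : Type := {p : Fin n × Fin n // p.1 ≠ p.2}

namespace Gossip

variable {n : ℕ}

/-- The caller of a call. -/
def caller (c : Call n) : Fin n := c.1.1

/-- The callee of a call. -/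
def callee (c : Call n) : Fin n := c.1.2

/-- Agent `a` is involved in call `c`. -/
def involves (c : Call n) (a : Fin n) : Prop := a = caller c ∨ a = callee c

/-- A gossip situation assigns to each agent the set of secrets it is familiar with;
secrets are identified with the agents holding them. -/
def Situation (n : ℕ) := Fin n → Finset (Fin n)

/-- The initial gossip situation: every agent only holds its own secret. -/
def root : Situation n := fun a => {a}

/-- The effect of a call on a gossip situation: caller and callee share their secrets. -/
def applyCall (c : Call n) (s : Situation n) : Situation n :=
  fun x => if x = caller c ∨ x = callee c then s (caller c) ∪ s (callee c) else s x

/-- The effect of a call sequence on a gossip situation. -/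
def applySeq (σ : List (Call n)) (s : Situation n) : Situation n :=
  σ.foldl (fun t c => applyCall c t) s

end Gossip

open Gossip

namespace GossipAux
variable {n : ℕ}

def weight (s : Situation n) : ℕ := ∑ a, (s a).card

lemma subset_applyCall (c : Call n) (s : Situation n) (x : Fin n) :
    s x ⊆ applyCall c s x := by
  unfold applyCall
  by_cases h : x = caller c ∨ x = callee c
  · rw [if_pos h]
    rcases h with h | h <;> subst h
    · exact Finset.subset_union_left
    · exact Finset.subset_union_right
  · rw [if_neg h]

lemma weight_le (c : Call n) (s : Situation n) : weight s ≤ weight (applyCall c s) :=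
  Finset.sum_le_sum fun a _ => Finset.card_le_card (subset_applyCall c s a)

lemma applyCall_eq_of_weight_eq (c : Call n) (s : Situation n)
    (h : weight s = weight (applyCall c s)) : applyCall c s = s := by
  have := (Finset.sum_eq_sum_iff_of_le
    (fun a (_ : a ∈ Finset.univ) => Finset.card_le_card (subset_applyCall c s a))).mp h
  funext x
  exact ((Finset.eq_of_subset_of_card_le (subset_applyCall c s x)
    (le_of_eq (this x (Finset.mem_univ x)).symm))).symm

lemma weight_root : weight (root : Situation n) = n := by
  simp [weight, root]

lemma weight_le_sq (s : Situation n) : weight s ≤ n ^ 2 := by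
  calc weight s ≤ ∑ _a : Fin n, n :=
        Finset.sum_le_sum fun a _ => by
          simpa using Finset.card_le_univ (s a)
    _ = n ^ 2 := by simp [sq]

lemma applySeq_append (l₁ l₂ : List (Call n)) (s : Situation n) :
    applySeq (l₁ ++ l₂) s = applySeq l₂ (applySeq l₁ s) := by
  simp [applySeq, List.foldl_append]

/-- one step of the prefix chain -/
lemma step (σ : List (Call n)) (i : ℕ) :
    applySeq (σ.take (i+1)) (root : Situation n) = applySeq (σ.take i) root ∨
    ∃ c, applySeq (σ.take (i+1)) (root : Situation n)
        = applyCall c (applySeq (σ.take i) root) := by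
  by_cases h : i < σ.length
  · right
    refine ⟨σ.get ⟨i, h⟩, ?_⟩
    rw [List.take_succ]
    simp only [List.getElem?_eq_getElem h]
    rw [applySeq_append]
    simp [applySeq]
  · left
    rw [List.take_of_length_le (by omega), List.take_of_length_le (by omega)]

lemma weight_step (σ : List (Call n)) (i : ℕ) :
    weight (applySeq (σ.take i) (root : Situation n))
      ≤ weight (applySeq (σ.take (i+1)) root) := by
  rcases step σ i with h | ⟨c, h⟩
  · rw [h]
  · rw [h]; exact weight_le c _

lemma weight_mono (σ : List (Call n)) : Monotone
    (fun i => weight (applySeq (σ.take i) (root : Situation n))) :=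
  monotone_nat_of_le_succ (weight_step σ)

lemma eq_step_of_weight_eq (σ : List (Call n)) (i : ℕ)
    (h : weight (applySeq (σ.take i) (root : Situation n))
        = weight (applySeq (σ.take (i+1)) root)) :
    applySeq (σ.take (i+1)) (root : Situation n) = applySeq (σ.take i) root := by
  rcases step σ i with h' | ⟨c, h'⟩
  · exact h'
  · rw [h'] at h ⊢
    exact applyCall_eq_of_weight_eq c _ h

/-- if weights at i ≤ j agree, all intermediate situations equal the one at i -/
lemma const_of_weight_eq (σ : List (Call n)) (i j : ℕ) (hij : i ≤ j)
    (h : weight (applySeq (σ.take i) (root : Situation n))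
        = weight (applySeq (σ.take j) root)) :
    ∀ k, i ≤ k → k ≤ j → applySeq (σ.take k) (root : Situation n)
        = applySeq (σ.take i) root := by
  intro k hik hkj
  induction k with
  | zero => have : i = 0 := by omega
            rw [this]
  | succ m ih =>
    rcases Nat.lt_or_ge i (m+1) with hlt | hge
    · have him : i ≤ m := by omega
      have hmj : m ≤ j := by omega
      have h1 : weight (applySeq (σ.take m) (root : Situation n))
          = weight (applySeq (σ.take (m+1)) root) := by
        have a1 := weight_mono σ him
        have a2 := weight_mono σ (show m+1 ≤ j by omega)
        have a3 := weight_step σ m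
        simp only at a1 a2
        omega
      rw [eq_step_of_weight_eq σ m h1]
      exact ih him hmj
    · have : i = m + 1 := by omega
      rw [this]

end GossipAux

/-- every call sequence of length ≥ n⁴ has a stationary contiguous
subsequence of length ≥ n². -/
theorem stationary_subsequence {n : ℕ} (hn : 3 ≤ n) (σ : List (Call n))
    (hlen : n ^ 4 ≤ σ.length) :
    ∃ σ₁ σ₂ σ₃ : List (Call n), σ = σ₁ ++ σ₂ ++ σ₃ ∧ n ^ 2 ≤ σ₂.length ∧
      ∀ k, 1 ≤ k → k ≤ σ₂.length →
        applySeq (σ₁ ++ σ₂.take k) root = applySeq (σ₁ ++ σ₂.take 1) root := by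
  classical
  open GossipAux in
  set W : ℕ → ℕ := fun i => weight (applySeq (σ.take i) (root : Situation n)) with hW
  set M : ℕ → ℕ := fun j => W (j * n ^ 2 + 1) with hM
  -- find a block with no weight increase
  have hexists : ∃ j < n ^ 2, M (j + 1) ≤ M j := by
    by_contra hcon
    push_neg at hcon
    have hstep : ∀ j ≤ n ^ 2, M 0 + j ≤ M j := by
      intro j hj
      induction j with
      | zero => omega
      | succ m ih =>
        have h1 := hcon m (by omega)
        have h2 := ih (by omega)
        omega
    have h0 : n ≤ M 0 := by
      have := weight_mono σ (show 0 ≤ 0 * n ^ 2 + 1 by omega)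
      simp only [hM, hW]
      have hr : W 0 = n := by
        simp only [hW, List.take_zero]
        simpa [applySeq] using (weight_root (n := n))
      calc n = W 0 := hr.symm
        _ ≤ W (0 * n ^ 2 + 1) := weight_mono σ (by omega)
    have htop : M (n ^ 2) ≤ n ^ 2 := weight_le_sq _
    have := hstep (n ^ 2) le_rfl
    omega
  obtain ⟨j, hj, hle⟩ := hexists
  have hjn : (j + 1) * n ^ 2 = j * n ^ 2 + n ^ 2 := by ring
  have heq : M j = M (j + 1) :=
    le_antisymm (weight_mono σ (by omega)) hle
  set a := j * n ^ 2 with ha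
  have haN : a + n ^ 2 ≤ n ^ 4 := by
    have : (j + 1) * n ^ 2 ≤ n ^ 2 * n ^ 2 :=
      Nat.mul_le_mul_right _ (by omega)
    have h4 : n ^ 2 * n ^ 2 = n ^ 4 := by ring
    omega
  have hconst := const_of_weight_eq σ (a + 1) ((j + 1) * n ^ 2 + 1)
      (by omega) heq
  refine ⟨σ.take a, (σ.drop a).take (n ^ 2), (σ.drop a).drop (n ^ 2), ?_, ?_, ?_⟩
  · rw [List.append_assoc, List.take_append_drop, List.take_append_drop]
  · rw [List.length_take, List.length_drop]
    omega
  · intro k hk1 hk2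
    rw [List.length_take, List.length_drop] at hk2
    have hk2' : k ≤ n ^ 2 := le_trans hk2 (min_le_left _ _)
    have hsplit : ∀ m, m ≤ n ^ 2 →
        σ.take a ++ ((σ.drop a).take (n ^ 2)).take m = σ.take (a + m) := by
      intro m hm
      rw [List.take_take, min_eq_left hm, ← List.take_add]
    rw [hsplit k hk2', hsplit 1 (by nlinarith)]
    have e1 := hconst (a + k) (by omega) (by omega)
    have e2 := hconst (a + 1) (by omega) (by omega)
    rw [e1, e2]
end

section
/- Every call sequence of length at least n⁴ contains an epistemically redundant call: there is a call c occurring at two positions, written σ = σ₁.c.σ₂.c.σ₃, such that σ₁.c(root) = σ₁.c.σ₂.c(root). -/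
open Gossip

theorem List.exists_eq_append_append_of_card_mul_lt {α β : Type*} [Fintype α]
    (f : List α → β) (t : Finset β) (hf : ∀ l, f l ∈ t) (σ : List α)
    (hσ : Fintype.card α * t.card < σ.length) :
    ∃ (σ₁ σ₂ σ₃ : List α) (c : α),
      σ = σ₁ ++ [c] ++ σ₂ ++ [c] ++ σ₃ ∧ f (σ₁ ++ [c]) = f (σ₁ ++ [c] ++ σ₂ ++ [c]) := by
  classical
  let key : Fin σ.length → α × β := fun i => (σ[(i : ℕ)], f (σ.take (i + 1)))
  have hcard :
      ((Finset.univ : Finset α) ×ˢ t).card < (Finset.univ : Finset (Fin σ.length)).card := by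
    simpa [Finset.card_product] using hσ
  obtain ⟨i, -, j, -, hne, hkey⟩ := Finset.exists_ne_map_eq_of_card_lt_of_maps_to hcard
    (f := key) fun i _ => by simp [key, hf]
  wlog hij : i < j generalizing i j
  · exact this j i hne.symm hkey.symm (lt_of_le_of_ne (not_lt.mp hij) hne.symm)
  obtain ⟨hc, hfij⟩ := Prod.mk.inj hkey
  have htake : σ.take (j + 1) =
      σ.take i ++ [σ[(i : ℕ)]] ++ (σ.drop (i + 1)).take (j - (i + 1)) ++ [σ[(i : ℕ)]] := by
    have hj : (j : ℕ) = i + 1 + (j - (i + 1)) := by omega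
    rw [← List.take_concat_get' σ j j.isLt, List.take_concat_get' σ i i.isLt, ← List.take_add,
      ← hj, ← hc]
  refine ⟨σ.take i, (σ.drop (i + 1)).take (j - (i + 1)), σ.drop (j + 1), σ[(i : ℕ)], ?_, ?_⟩
  · rw [← htake, List.take_append_drop]
  · rw [← htake, List.take_concat_get' σ i i.isLt]
    exact hfij

namespace Gossip

variable {n : ℕ}

instance : Fintype (Call n) := by unfold Call; infer_instance

theorem card_call_lt (hn : 0 < n) : Fintype.card (Call n) < n ^ 2 := by
  have h : Fintype.card (Call n) < Fintype.card (Fin n × Fin n) := by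
    unfold Call
    exact Fintype.card_subtype_lt (x := (⟨0, hn⟩, ⟨0, hn⟩)) (by simp)
  simpa [Fintype.card_prod, sq] using h

theorem applySeq_append (σ τ : List (Call n)) (s : Situation n) :
    applySeq (σ ++ τ) s = applySeq τ (applySeq σ s) :=
  List.foldl_append

theorem subset_applyCall (c : Call n) (s : Situation n) (a : Fin n) :
    s a ⊆ applyCall c s a := by
  unfold applyCall
  split_ifs with h
  · rcases h with rfl | rfl
    · exact Finset.subset_union_left
    · exact Finset.subset_union_right
  · exact subset_rfl

theorem subset_applySeq (σ : List (Call n)) (s : Situation n) (a : Fin n) :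
    s a ⊆ applySeq σ s a := by
  induction σ generalizing s with
  | nil => exact subset_rfl
  | cons c σ ih => exact (subset_applyCall c s a).trans (ih (applyCall c s))

def weight (s : Situation n) : ℕ := ∑ a, (s a).card

theorem weight_le (s : Situation n) : weight s ≤ n ^ 2 :=
  calc weight s ≤ ∑ _a : Fin n, n :=
        Finset.sum_le_sum fun a _ => by simpa using Finset.card_le_univ (s a)
    _ = n ^ 2 := by simp [sq]

theorem applySeq_eq_self_of_weight_le {σ : List (Call n)} {s : Situation n}
    (h : weight (applySeq σ s) ≤ weight s) : applySeq σ s = s := by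
  have hsub := subset_applySeq σ s
  have hcard := (Finset.sum_eq_sum_iff_of_le fun a _ => Finset.card_le_card (hsub a)).mp
    (le_antisymm (Finset.sum_le_sum fun a _ => Finset.card_le_card (hsub a)) h)
  funext a
  exact (Finset.eq_of_subset_of_card_le (hsub a) (hcard a (Finset.mem_univ a)).ge).symm

end Gossip

/-- every call sequence of length ≥ n⁴ contains an epistemically
redundant call. -/
theorem epistemically_redundant_call {n : ℕ} (hn : 3 ≤ n) (σ : List (Call n))
    (hlen : n ^ 4 ≤ σ.length) :
    ∃ (σ₁ σ₂ σ₃ : List (Call n)) (c : Call n),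
      σ = σ₁ ++ [c] ++ σ₂ ++ [c] ++ σ₃ ∧
      applySeq (σ₁ ++ [c]) root = applySeq (σ₁ ++ [c] ++ σ₂ ++ [c]) root := by
  have hcard := card_call_lt (n := n) (by omega)
  have hσ : Fintype.card (Call n) * (Finset.range (n ^ 2 + 1)).card < σ.length := by
    rw [Finset.card_range]
    nlinarith
  obtain ⟨σ₁, σ₂, σ₃, c, hsplit, hweight⟩ :=
    List.exists_eq_append_append_of_card_mul_lt (fun τ => weight (applySeq τ root))
      (Finset.range (n ^ 2 + 1)) (fun τ => Finset.mem_range_succ_iff.mpr (weight_le _)) σ hσ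
  refine ⟨σ₁, σ₂, σ₃, c, hsplit, ?_⟩
  rw [List.append_assoc _ σ₂, applySeq_append _ (σ₂ ++ [c])] at hweight ⊢
  exact (applySeq_eq_self_of_weight_le hweight.ge).symm
end

section
/- Appending a call not involving agent a does not change the truth of K_a φ: for all agents a, b, c with a ∉ {b,c}, all call sequences σ and all formulas φ, σ ⊨ K_a φ iff σ.bc ⊨ K_a φ. -/
open Gossip

namespace Gossip

/-- The indistinguishability relation `∼ₐ`: the smallest equivalence relation on call
sequences such that calls not involving `a` can be appended on either side, and a call
involving `a` can be appended on both sides provided `a` observes the same secrets. -/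
inductive Indist {n : ℕ} (a : Fin n) : List (Call n) → List (Call n) → Prop where
  | refl (σ : List (Call n)) : Indist a σ σ
  | symm {σ τ : List (Call n)} : Indist a σ τ → Indist a τ σ
  | trans {σ τ υ : List (Call n)} : Indist a σ τ → Indist a τ υ → Indist a σ υ
  | skip_left {σ τ : List (Call n)} {c : Call n} :
      Indist a σ τ → ¬ involves c a → Indist a (σ ++ [c]) τ
  | skip_right {σ τ : List (Call n)} {c : Call n} :
      Indist a σ τ → ¬ involves c a → Indist a σ (τ ++ [c])
  | call {σ τ : List (Call n)} {c : Call n} :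
      Indist a σ τ → involves c a →
      applySeq (σ ++ [c]) root a = applySeq (τ ++ [c]) root a →
      Indist a (σ ++ [c]) (τ ++ [c])

/-- Formulas of the language `L`: atomic formulas `F_a S`, negation, conjunction and
the knowledge modalities `K_a`. -/
inductive Form (n : ℕ) : Type where
  | F : Fin n → Fin n → Form n
  | neg : Form n → Form n
  | and : Form n → Form n → Form n
  | K : Fin n → Form n → Form n

/-- Truth of a formula after a call sequence. -/
def sat {n : ℕ} : List (Call n) → Form n → Prop
  | σ, .F a S => S ∈ applySeq σ root a
  | σ, .neg φ => ¬ sat σ φ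
  | σ, .and φ ψ => sat σ φ ∧ sat σ ψ
  | σ, .K a φ => ∀ τ, Indist a σ τ → sat τ φ

end Gossip

/-- appending a call not involving agent `a` does not change the truth
of `K_a φ`. -/
theorem knowledge_invariant_under_other_calls {n : ℕ} (hn : 3 ≤ n)
    (a : Fin n) (c : Call n) (hc : ¬ involves c a)
    (σ : List (Call n)) (φ : Form n) :
    sat σ (Form.K a φ) ↔ sat (σ ++ [c]) (Form.K a φ) := by
  have h : Indist a σ (σ ++ [c]) := Indist.skip_right (Indist.refl σ) hc
  constructor
  · intro H τ hτ
    exact H τ (Indist.trans h hτ)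
  · intro H τ hτ
    exact H τ (Indist.trans (Indist.symm h) hτ)
end
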